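/- There exist constants C > 0 and R₀ ≥ 1 such that for every λ ∈ (0, 1/R₀): |log λ| − C ≤ λ^{−2} inf_{(û,ŵ) ∈ 𝒲_λ} I_λ(û, ŵ) ≤ |log λ| + C, where I_λ(û, ŵ) = ∫₀¹ r ρ^el_λ(r) dr. -/

import Mathlib

open MeasureTheory Set Filter

/-- The elastic energy density
`ρ^el_λ(r) = (ŵ² − 1 + û')² + (û/r)² + λ²(ŵ'² + ŵ²/r²)`. -/
noncomputable def rhoL (lam : ℝ) (uh wh uh' wh' : ℝ → ℝ) (r : ℝ) : ℝ :=
  (wh r ^ 2 - 1 + uh' r) ^ 2 + (uh r / r) ^ 2 + lam ^ 2 * (wh' r ^ 2 + wh r ^ 2 / r ^ 2)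

/-- Membership in `𝒲_λ`: `(û, ŵ) ∈ W^{1,2}_loc((0,∞), ℝ²)` (continuous representatives
with pointwise derivatives `uh', wh'`, locally square integrable) such that
`∫₀¹ r ρ^el_λ(r) dr < ∞`. -/
def MemWL (lam : ℝ) (uh wh uh' wh' : ℝ → ℝ) : Prop :=
  (∀ r ∈ Ioi (0 : ℝ), HasDerivAt uh (uh' r) r) ∧
  (∀ r ∈ Ioi (0 : ℝ), HasDerivAt wh (wh' r) r) ∧
  (∀ a b : ℝ, 0 < a → IntegrableOn (fun r => uh' r ^ 2 + wh' r ^ 2) (Ioo a b)) ∧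
  IntegrableOn (fun r => r * rhoL lam uh wh uh' wh' r) (Ioo 0 1)

/-!
Upper bound: the competitor `û = 0`, `ŵ = r² / (r² + λ²)` has
`r ρ ≤ λ² r / (r² + λ²) + 8 λ⁴ r / (r² + λ²)²`, whose integral over `(0, 1)` is
`λ² |log λ| + O(λ²)`.

Lower bound, by calibration: completing squares, for every `φ` with `φ + λ² / r ≥ 0`,
`r ρ ≥ (φ û)' - φ - (φ² / (4 r) + r φ'² / 4)`.
For `φ = λ² r / (1 + λ²) - λ² r / (r² + λ²)` the error term is `O(λ⁴ r / (r² + λ²)²)` and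
`∫₀¹ -φ = λ² |log λ| + O(λ²)`. Since `φ 1 = 0`, integrating over `(s, 1)` leaves only the boundary
term `φ(s) û(s)`, and this vanishes along a sequence `s → 0`: `∫₀¹ û² / r < ∞` forces `|û(s)| ≤ 1`
for arbitrarily small `s`.
-/

open Topology

lemma hasDerivAt_log_sq_add_div_two {c : ℝ} (hc : 0 < c) (r : ℝ) :
    HasDerivAt (fun r => Real.log (r ^ 2 + c) / 2) (r / (r ^ 2 + c)) r := by
  have hsq : HasDerivAt (fun r => r ^ 2 + c) (2 * r) r := by
    simpa using (hasDerivAt_pow 2 r).add_const c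
  refine ((hsq.log (by positivity)).div_const 2).congr_deriv ?_
  ring

lemma hasDerivAt_neg_inv_sq_add_div_two {c : ℝ} (hc : 0 < c) (r : ℝ) :
    HasDerivAt (fun r => -(r ^ 2 + c)⁻¹ / 2) (r / (r ^ 2 + c) ^ 2) r := by
  have hsq : HasDerivAt (fun r => r ^ 2 + c) (2 * r) r := by
    simpa using (hasDerivAt_pow 2 r).add_const c
  refine ((hsq.inv (by positivity)).neg.div_const 2).congr_deriv ?_
  field_simp

lemma frequently_mul_lt_of_integrableOn {f : ℝ → ℝ} {a c : ℝ} (ha : 0 < a) (hc : 0 < c)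
    (hf : IntegrableOn f (Ioo 0 a)) : ∃ᶠ r in 𝓝[>] 0, r * f r < c := by
  intro hev
  simp only [not_lt] at hev
  obtain ⟨u, hu, hsub⟩ := mem_nhdsGT_iff_exists_Ioo_subset.1 hev
  set δ := min u a
  have hδ : 0 < δ := lt_min hu ha
  have hinv : IntegrableOn (fun r => c * r⁻¹) (Ioo 0 δ) := by
    refine (hf.mono_set (Ioo_subset_Ioo_right (min_le_right u a))).mono'
      (by fun_prop) ((ae_restrict_iff' measurableSet_Ioo).2 (ae_of_all _ fun r hr => ?_))
    have hr0 : 0 < r := hr.1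
    have hcr : c ≤ r * f r := hsub ⟨hr0, hr.2.trans_le (min_le_left u a)⟩
    rw [Real.norm_of_nonneg (by positivity), ← div_eq_mul_inv, div_le_iff₀ hr0]
    linarith
  have : IntervalIntegrable (fun r => r⁻¹) volume 0 δ := by
    rw [intervalIntegrable_iff_integrableOn_Ioo_of_le hδ.le]
    simpa [IntegrableOn, ← mul_assoc, hc.ne'] using hinv.const_mul c⁻¹
  simp [hδ.ne, hδ.le] at this

lemma le_mul_rhoL_of_add_div_nonneg {lam r a b : ℝ} (uh wh uh' wh' : ℝ → ℝ) (hr : 0 < r)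
    (ha : 0 ≤ a + lam ^ 2 / r) :
    a * uh' r + b * uh r - a - (a ^ 2 / (4 * r) + r * b ^ 2 / 4) ≤
      r * rhoL lam uh wh uh' wh' r := by
  have key : r * rhoL lam uh wh uh' wh' r -
      (a * uh' r + b * uh r - a - (a ^ 2 / (4 * r) + r * b ^ 2 / 4)) =
      (2 * r * (wh r ^ 2 - 1 + uh' r) - a) ^ 2 / (4 * r) + (2 * uh r - r * b) ^ 2 / (4 * r) +
        lam ^ 2 * r * wh' r ^ 2 + wh r ^ 2 * (a + lam ^ 2 / r) := by
    unfold rhoL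
    field_simp
    ring
  rw [← sub_nonneg, key]
  exact add_nonneg (by positivity) (mul_nonneg (sq_nonneg _) ha)

lemma sq_le_mul_mul_rhoL (lam : ℝ) (uh wh uh' wh' : ℝ → ℝ) {r : ℝ} (hr : r ≠ 0) :
    uh r ^ 2 ≤ r * (r * rhoL lam uh wh uh' wh' r) := by
  have : r * (r * rhoL lam uh wh uh' wh' r) = uh r ^ 2 + r ^ 2 * ((wh r ^ 2 - 1 + uh' r) ^ 2 +
      lam ^ 2 * (wh' r ^ 2 + wh r ^ 2 / r ^ 2)) := by
    unfold rhoL; field_simp; ring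
  rw [this, le_add_iff_nonneg_right]
  positivity

section Calibration

variable {lam r : ℝ}

/-- Up to the core scale `λ` this is `-λ² / r`, the most negative multiplier allowed in
`le_mul_rhoL_of_add_div_nonneg`; the linear term makes it vanish at `r = 1`. -/
noncomputable def calibration (lam r : ℝ) : ℝ :=
  lam ^ 2 / (1 + lam ^ 2) * r - lam ^ 2 * (r / (r ^ 2 + lam ^ 2))

noncomputable def calibrationDeriv (lam r : ℝ) : ℝ :=
  lam ^ 2 / (1 + lam ^ 2) - lam ^ 2 * ((lam ^ 2 - r ^ 2) / (r ^ 2 + lam ^ 2) ^ 2)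

lemma hasDerivAt_calibration (hlam : 0 < lam) (r : ℝ) :
    HasDerivAt (calibration lam) (calibrationDeriv lam r) r := by
  have hsq : HasDerivAt (fun r => r ^ 2 + lam ^ 2) (2 * r) r := by
    simpa using (hasDerivAt_pow 2 r).add_const (lam ^ 2)
  have hq : r ^ 2 + lam ^ 2 ≠ 0 := by positivity
  refine (((hasDerivAt_id r).const_mul _).sub (((hasDerivAt_id r).div hsq hq).const_mul _))
    |>.congr_deriv ?_
  simp only [id, calibrationDeriv]
  field_simp
  ring

lemma calibration_one : calibration lam 1 = 0 := by
  unfold calibration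
  rw [one_pow, add_comm]
  ring

lemma continuous_calibration (hlam : 0 < lam) : Continuous (calibration lam) :=
  continuous_iff_continuousAt.2 fun r => (hasDerivAt_calibration hlam r).continuousAt

lemma abs_calibration_le (hlam : 0 < lam) (hr0 : 0 ≤ r) (hr1 : r ≤ 1) :
    |calibration lam r| ≤ lam ^ 2 * (r / (r ^ 2 + lam ^ 2)) := by
  have hq : 0 < r ^ 2 + lam ^ 2 := by positivity
  have hk : lam ^ 2 / (1 + lam ^ 2) * r ≤ lam ^ 2 * (r / (r ^ 2 + lam ^ 2)) := by
    rw [mul_div_assoc', div_mul_eq_mul_div, div_le_div_iff₀ (by positivity) hq]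
    nlinarith [mul_nonneg (mul_nonneg (sq_nonneg lam) hr0)
      (sub_nonneg.2 (pow_le_one₀ (n := 2) hr0 hr1))]
  rw [abs_le]
  unfold calibration
  constructor <;> nlinarith [show 0 ≤ lam ^ 2 / (1 + lam ^ 2) * r by positivity]

lemma abs_calibrationDeriv_le (hlam : 0 < lam) (hr0 : 0 ≤ r) (hr1 : r ≤ 1) :
    |calibrationDeriv lam r| ≤ 2 * lam ^ 2 / (r ^ 2 + lam ^ 2) := by
  have hq : 0 < r ^ 2 + lam ^ 2 := by positivity
  have hk : lam ^ 2 / (1 + lam ^ 2) ≤ lam ^ 2 / (r ^ 2 + lam ^ 2) :=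
    div_le_div_of_nonneg_left (sq_nonneg _) hq (by nlinarith)
  have hm : |(lam ^ 2 - r ^ 2) / (r ^ 2 + lam ^ 2) ^ 2| ≤ 1 / (r ^ 2 + lam ^ 2) := by
    have habs : |lam ^ 2 - r ^ 2| ≤ r ^ 2 + lam ^ 2 :=
      abs_le.2 ⟨by nlinarith [sq_nonneg r], by nlinarith [sq_nonneg r]⟩
    rw [abs_div, abs_of_pos (by positivity : (0:ℝ) < (r ^ 2 + lam ^ 2) ^ 2),
      sq (r ^ 2 + lam ^ 2), ← div_div]
    exact div_le_div_of_nonneg_right ((div_le_one hq).2 habs) hq.le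
  unfold calibrationDeriv
  calc |lam ^ 2 / (1 + lam ^ 2) - lam ^ 2 * ((lam ^ 2 - r ^ 2) / (r ^ 2 + lam ^ 2) ^ 2)|
      ≤ lam ^ 2 / (1 + lam ^ 2) + lam ^ 2 * |(lam ^ 2 - r ^ 2) / (r ^ 2 + lam ^ 2) ^ 2| := by
        refine (abs_sub _ _).trans ?_
        rw [abs_mul, abs_of_nonneg (sq_nonneg lam), abs_of_nonneg (by positivity)]
    _ ≤ lam ^ 2 / (r ^ 2 + lam ^ 2) + lam ^ 2 * (1 / (r ^ 2 + lam ^ 2)) := by gcongr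
    _ = 2 * lam ^ 2 / (r ^ 2 + lam ^ 2) := by ring

lemma calibration_error_le (hlam : 0 < lam) (hr0 : 0 < r) (hr1 : r ≤ 1) :
    calibration lam r ^ 2 / (4 * r) + r * calibrationDeriv lam r ^ 2 / 4 ≤
      2 * lam ^ 4 * (r / (r ^ 2 + lam ^ 2) ^ 2) := by
  have hq : 0 < r ^ 2 + lam ^ 2 := by positivity
  have h1 : calibration lam r ^ 2 ≤ (lam ^ 2 * (r / (r ^ 2 + lam ^ 2))) ^ 2 :=
    sq_le_sq.2 ((abs_calibration_le hlam hr0.le hr1).trans (le_abs_self _))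
  have h2 : calibrationDeriv lam r ^ 2 ≤ (2 * lam ^ 2 / (r ^ 2 + lam ^ 2)) ^ 2 :=
    sq_le_sq.2 ((abs_calibrationDeriv_le hlam hr0.le hr1).trans (le_abs_self _))
  calc calibration lam r ^ 2 / (4 * r) + r * calibrationDeriv lam r ^ 2 / 4
      ≤ (lam ^ 2 * (r / (r ^ 2 + lam ^ 2))) ^ 2 / (4 * r)
          + r * (2 * lam ^ 2 / (r ^ 2 + lam ^ 2)) ^ 2 / 4 := by gcongr
    _ = 5 / 4 * lam ^ 4 * (r / (r ^ 2 + lam ^ 2) ^ 2) := by field_simp; ring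
    _ ≤ 2 * lam ^ 4 * (r / (r ^ 2 + lam ^ 2) ^ 2) := by gcongr; norm_num

end Calibration

section LowerBound

variable {lam s : ℝ} {uh wh uh' wh' : ℝ → ℝ}

noncomputable def lowerPotential (lam r : ℝ) : ℝ :=
  lam ^ 2 * (Real.log (r ^ 2 + lam ^ 2) / 2) - lam ^ 2 / (1 + lam ^ 2) * (r ^ 2 / 2)
    - 2 * lam ^ 4 * (-(r ^ 2 + lam ^ 2)⁻¹ / 2)

lemma hasDerivAt_lowerPotential (hlam : 0 < lam) (r : ℝ) :
    HasDerivAt (lowerPotential lam)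
      (-calibration lam r - 2 * lam ^ 4 * (r / (r ^ 2 + lam ^ 2) ^ 2)) r := by
  have hc : 0 < lam ^ 2 := by positivity
  have hsq : HasDerivAt (fun r : ℝ => r ^ 2 / 2) r r := by
    simpa using (hasDerivAt_pow 2 r).div_const 2
  refine ((((hasDerivAt_log_sq_add_div_two hc r).const_mul _).sub (hsq.const_mul _)).sub
    ((hasDerivAt_neg_inv_sq_add_div_two hc r).const_mul _)).congr_deriv ?_
  unfold calibration
  ring

lemma le_lowerPotential_one_sub_zero (hlam : 0 < lam) :
    lam ^ 2 * (-Real.log lam - 3 / 2) ≤ lowerPotential lam 1 - lowerPotential lam 0 := by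
  have hlog : 0 ≤ Real.log (1 + lam ^ 2) := Real.log_nonneg (by nlinarith)
  have hk : lam ^ 2 / (1 + lam ^ 2) ≤ lam ^ 2 :=
    div_le_self (sq_nonneg _) (by nlinarith)
  have h0 : lowerPotential lam 0 = lam ^ 2 * Real.log lam + lam ^ 2 := by
    unfold lowerPotential
    rw [zero_pow two_ne_zero, zero_add, Real.log_pow]
    field_simp
    ring
  have h1 : lam ^ 2 * (Real.log (1 + lam ^ 2) / 2) - lam ^ 2 / (1 + lam ^ 2) / 2
      ≤ lowerPotential lam 1 := by
    unfold lowerPotential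
    rw [one_pow]
    have : 0 ≤ 2 * lam ^ 4 * ((1 + lam ^ 2)⁻¹ / 2) := by positivity
    linarith
  nlinarith [mul_nonneg (sq_nonneg lam) hlog]

lemma calibration_add_div_nonneg (hlam : 0 < lam) {r : ℝ} (hr0 : 0 < r) (hr1 : r ≤ 1) :
    0 ≤ calibration lam r + lam ^ 2 / r := by
  have h := (abs_le.1 (abs_calibration_le hlam hr0.le hr1)).1
  have : lam ^ 2 * (r / (r ^ 2 + lam ^ 2)) ≤ lam ^ 2 / r := by
    rw [mul_div_assoc', div_le_div_iff₀ (by positivity) hr0]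
    nlinarith [pow_pos hlam 2, pow_pos hlam 4]
  linarith

lemma lowerPotential_sub_le_integral (hlam : 0 < lam) (h : MemWL lam uh wh uh' wh')
    (hs0 : 0 < s) (hs1 : s < 1) :
    lowerPotential lam 1 - lowerPotential lam s - calibration lam s * uh s ≤
      ∫ r in Ioo 0 1, r * rhoL lam uh wh uh' wh' r := by
  obtain ⟨hu, -, -, hint⟩ := h
  set F := fun r => calibration lam r * uh r + lowerPotential lam r
  have hF : ∀ r ∈ Ioi 0, HasDerivAt F (calibrationDeriv lam r * uh r + calibration lam r * uh' r +
      (-calibration lam r - 2 * lam ^ 4 * (r / (r ^ 2 + lam ^ 2) ^ 2))) r := fun r hr =>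
    ((hasDerivAt_calibration hlam r).mul (hu r hr)).add (hasDerivAt_lowerPotential hlam r)
  have hF' : ∀ r ∈ Ioo s 1, calibrationDeriv lam r * uh r + calibration lam r * uh' r +
      (-calibration lam r - 2 * lam ^ 4 * (r / (r ^ 2 + lam ^ 2) ^ 2)) ≤
        r * rhoL lam uh wh uh' wh' r := fun r ⟨hsr, hr1⟩ => by
    have hr0 := hs0.trans hsr
    have := le_mul_rhoL_of_add_div_nonneg (b := calibrationDeriv lam r) uh wh uh' wh' hr0
      (calibration_add_div_nonneg hlam hr0 hr1.le)
    linarith [calibration_error_le hlam hr0 hr1.le]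
  have hFTC : F 1 - F s ≤ ∫ r in s..1, r * rhoL lam uh wh uh' wh' r :=
    intervalIntegral.sub_le_integral_of_hasDeriv_right_of_le hs1.le
      (fun r hr => (hF r (hs0.trans_le hr.1)).continuousAt.continuousWithinAt)
      (fun r hr => (hF r (hs0.trans hr.1)).hasDerivWithinAt)
      ((integrableOn_Icc_iff_integrableOn_Ioo).2 (hint.mono_set (Ioo_subset_Ioo_left hs0.le))) hF'
  have hmono : ∫ r in s..1, r * rhoL lam uh wh uh' wh' r ≤
      ∫ r in Ioo 0 1, r * rhoL lam uh wh uh' wh' r := by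
    rw [intervalIntegral.integral_of_le hs1.le, integral_Ioc_eq_integral_Ioo]
    refine setIntegral_mono_set hint ?_ (Ioo_subset_Ioo_left hs0.le).eventuallyLE
    filter_upwards [ae_restrict_mem measurableSet_Ioo] with r hr
    have : 0 ≤ rhoL lam uh wh uh' wh' r := by unfold rhoL; positivity
    exact mul_nonneg hr.1.le this
  simp only [F, calibration_one, zero_mul, zero_add] at hFTC
  linarith

lemma le_integral_rhoL (hlam : 0 < lam) (h : MemWL lam uh wh uh' wh') :
    lam ^ 2 * (-Real.log lam - 3 / 2) ≤ ∫ r in Ioo 0 1, r * rhoL lam uh wh uh' wh' r := by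
  refine (le_lowerPotential_one_sub_zero hlam).trans ?_
  have hfreq := (frequently_mul_lt_of_integrableOn one_pos one_pos h.2.2.2).and_eventually
    (Ioo_mem_nhdsGT one_pos)
  have hQ : Continuous (lowerPotential lam) :=
    continuous_iff_continuousAt.2 fun r => (hasDerivAt_lowerPotential hlam r).continuousAt
  have hφ := continuous_calibration hlam
  have hlim : Tendsto (fun s => lowerPotential lam 1 - lowerPotential lam s - |calibration lam s|)
      (𝓝[>] 0) (𝓝 (lowerPotential lam 1 - lowerPotential lam 0)) := by
    have h0 : calibration lam 0 = 0 := by simp [calibration]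
    simpa [h0] using ((by fun_prop : Continuous fun s =>
      lowerPotential lam 1 - lowerPotential lam s - |calibration lam s|).tendsto 0).mono_left
        nhdsWithin_le_nhds
  refine le_of_tendsto_of_frequently hlim (hfreq.mono fun s ⟨hsρ, hs0, hs1⟩ => ?_)
  have hu : |uh s| ≤ 1 := by
    have := sq_le_mul_mul_rhoL lam uh wh uh' wh' hs0.ne'
    nlinarith [sq_abs (uh s), abs_nonneg (uh s)]
  have := lowerPotential_sub_le_integral hlam h hs0 hs1
  have : calibration lam s * uh s ≤ |calibration lam s| := by
    calc calibration lam s * uh s ≤ |calibration lam s * uh s| := le_abs_self _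
      _ = |calibration lam s| * |uh s| := abs_mul _ _
      _ ≤ |calibration lam s| := mul_le_of_le_one_right (abs_nonneg _) hu
  linarith

end LowerBound

section UpperBound

variable {lam : ℝ}

noncomputable def coreProfile (lam r : ℝ) : ℝ := r ^ 2 / (r ^ 2 + lam ^ 2)

noncomputable def coreProfileDeriv (lam r : ℝ) : ℝ := 2 * lam ^ 2 * r / (r ^ 2 + lam ^ 2) ^ 2

lemma hasDerivAt_coreProfile (hlam : 0 < lam) (r : ℝ) :
    HasDerivAt (coreProfile lam) (coreProfileDeriv lam r) r := by
  have hsq : HasDerivAt (fun r : ℝ => r ^ 2) (2 * r) r := by simpa using hasDerivAt_pow 2 r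
  refine (hsq.div (hsq.add_const (lam ^ 2)) (by positivity)).congr_deriv ?_
  unfold coreProfileDeriv
  ring

lemma continuous_coreProfile_majorant (hlam : 0 < lam) :
    Continuous fun r : ℝ => lam ^ 2 * (r / (r ^ 2 + lam ^ 2)) +
      8 * lam ^ 4 * (r / (r ^ 2 + lam ^ 2) ^ 2) := by
  have : ∀ r : ℝ, r ^ 2 + lam ^ 2 ≠ 0 := fun r => by positivity
  fun_prop (disch := simp [this])

lemma mul_rhoL_coreProfile_le (hlam : 0 < lam) {r : ℝ} (hr : 0 < r) :
    r * rhoL lam 0 (coreProfile lam) 0 (coreProfileDeriv lam) r ≤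
      lam ^ 2 * (r / (r ^ 2 + lam ^ 2)) + 8 * lam ^ 4 * (r / (r ^ 2 + lam ^ 2) ^ 2) := by
  have hq : 0 < r ^ 2 + lam ^ 2 := by positivity
  have hsq : r ^ 2 ≤ r ^ 2 + lam ^ 2 := by nlinarith
  have h1 : r * (coreProfile lam r ^ 2 - 1) ^ 2 ≤ 4 * lam ^ 4 * (r / (r ^ 2 + lam ^ 2) ^ 2) := by
    have : r * (coreProfile lam r ^ 2 - 1) ^ 2 =
        lam ^ 4 * (r / (r ^ 2 + lam ^ 2) ^ 2) *
          ((2 * r ^ 2 + lam ^ 2) / (r ^ 2 + lam ^ 2)) ^ 2 := by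
      unfold coreProfile; field_simp; ring
    have hle : (2 * r ^ 2 + lam ^ 2) / (r ^ 2 + lam ^ 2) ≤ 2 := by
      rw [div_le_iff₀ hq]; nlinarith
    rw [this]
    calc _ ≤ lam ^ 4 * (r / (r ^ 2 + lam ^ 2) ^ 2) * 2 ^ 2 := by gcongr
      _ = _ := by ring
  have h2 : r * (lam ^ 2 * coreProfileDeriv lam r ^ 2) ≤
      4 * lam ^ 4 * (r / (r ^ 2 + lam ^ 2) ^ 2) := by
    have : r * (lam ^ 2 * coreProfileDeriv lam r ^ 2) =
        4 * lam ^ 4 * (r / (r ^ 2 + lam ^ 2) ^ 2) * (lam ^ 2 * r ^ 2 / (r ^ 2 + lam ^ 2) ^ 2) := by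
      unfold coreProfileDeriv; field_simp; ring
    rw [this]
    refine mul_le_of_le_one_right (by positivity) ((div_le_one (by positivity)).2 ?_)
    nlinarith [sq_nonneg (r ^ 2 - lam ^ 2), sq_nonneg r, sq_nonneg lam]
  have h3 : r * (lam ^ 2 * (coreProfile lam r ^ 2 / r ^ 2)) ≤
      lam ^ 2 * (r / (r ^ 2 + lam ^ 2)) := by
    have : r * (lam ^ 2 * (coreProfile lam r ^ 2 / r ^ 2)) =
        lam ^ 2 * (r / (r ^ 2 + lam ^ 2)) * (r ^ 2 / (r ^ 2 + lam ^ 2)) := by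
      unfold coreProfile; field_simp
    rw [this]
    exact mul_le_of_le_one_right (by positivity) ((div_le_one hq).2 hsq)
  have : r * rhoL lam 0 (coreProfile lam) 0 (coreProfileDeriv lam) r =
      r * (coreProfile lam r ^ 2 - 1) ^ 2 + r * (lam ^ 2 * coreProfileDeriv lam r ^ 2) +
        r * (lam ^ 2 * (coreProfile lam r ^ 2 / r ^ 2)) := by
    simp only [rhoL, Pi.zero_apply, zero_div]; ring
  linarith

lemma memWL_coreProfile (hlam : 0 < lam) :
    MemWL lam 0 (coreProfile lam) 0 (coreProfileDeriv lam) := by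
  have hq : ∀ r : ℝ, r ^ 2 + lam ^ 2 ≠ 0 := fun r => by positivity
  have hcont : Continuous (coreProfileDeriv lam) := by
    unfold coreProfileDeriv; fun_prop (disch := simp [hq])
  refine ⟨fun r _ => hasDerivAt_const r 0, fun r _ => hasDerivAt_coreProfile hlam r,
    fun a b _ => ?_, ?_⟩
  · exact ((by fun_prop : Continuous fun r => (0 : ℝ → ℝ) r ^ 2 + coreProfileDeriv lam r ^ 2)
      |>.integrableOn_Icc).mono_set Ioo_subset_Icc_self
  · refine (((continuous_coreProfile_majorant hlam).integrableOn_Icc (a := 0) (b := 1)).mono_set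
      Ioo_subset_Icc_self).mono' ?_ ((ae_restrict_iff' measurableSet_Ioo).2
        (ae_of_all _ fun r hr => ?_))
    · have : Measurable (coreProfile lam) := (continuous_iff_continuousAt.2 fun r =>
        (hasDerivAt_coreProfile hlam r).continuousAt).measurable
      have := hcont.measurable
      exact Measurable.aestronglyMeasurable (by unfold rhoL; fun_prop)
    · have : 0 ≤ rhoL lam 0 (coreProfile lam) 0 (coreProfileDeriv lam) r := by
        unfold rhoL; positivity
      rw [Real.norm_of_nonneg (mul_nonneg hr.1.le this)]
      exact mul_rhoL_coreProfile_le hlam hr.1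

lemma integral_rhoL_coreProfile_le (hlam : 0 < lam) (hlam1 : lam ≤ 1) :
    ∫ r in Ioo 0 1, r * rhoL lam 0 (coreProfile lam) 0 (coreProfileDeriv lam) r ≤
      lam ^ 2 * (-Real.log lam + 9 / 2) := by
  have hc : 0 < lam ^ 2 := by positivity
  set P := fun r : ℝ => lam ^ 2 * (Real.log (r ^ 2 + lam ^ 2) / 2) +
    8 * lam ^ 4 * (-(r ^ 2 + lam ^ 2)⁻¹ / 2)
  have hP : ∫ r in Ioo 0 1, (lam ^ 2 * (r / (r ^ 2 + lam ^ 2)) +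
      8 * lam ^ 4 * (r / (r ^ 2 + lam ^ 2) ^ 2)) = P 1 - P 0 := by
    rw [← integral_Ioc_eq_integral_Ioo, ← intervalIntegral.integral_of_le zero_le_one]
    exact intervalIntegral.integral_eq_sub_of_hasDerivAt
      (fun r _ => ((hasDerivAt_log_sq_add_div_two hc r).const_mul _).add
        ((hasDerivAt_neg_inv_sq_add_div_two hc r).const_mul _))
      ((continuous_coreProfile_majorant hlam).intervalIntegrable 0 1)
  have hbound : P 1 - P 0 ≤ lam ^ 2 * (-Real.log lam + 9 / 2) := by
    have hlog : Real.log (1 + lam ^ 2) ≤ 1 := by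
      linarith [Real.log_le_sub_one_of_pos (by positivity : (0:ℝ) < 1 + lam ^ 2),
        pow_le_one₀ (n := 2) hlam.le hlam1]
    have h0 : P 0 = lam ^ 2 * Real.log lam - 4 * lam ^ 2 := by
      simp only [P]
      rw [zero_pow two_ne_zero, zero_add, Real.log_pow]
      field_simp
      ring
    have h1 : P 1 ≤ lam ^ 2 * (1 / 2) := by
      simp only [P]
      rw [one_pow]
      have : 0 ≤ 8 * lam ^ 4 * ((1 + lam ^ 2)⁻¹ / 2) := by positivity
      nlinarith
    rw [h0]
    nlinarith
  calc ∫ r in Ioo 0 1, r * rhoL lam 0 (coreProfile lam) 0 (coreProfileDeriv lam) r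
      ≤ ∫ r in Ioo 0 1, (lam ^ 2 * (r / (r ^ 2 + lam ^ 2)) +
          8 * lam ^ 4 * (r / (r ^ 2 + lam ^ 2) ^ 2)) :=
        setIntegral_mono_on (memWL_coreProfile hlam).2.2.2
          (((continuous_coreProfile_majorant hlam).integrableOn_Icc).mono_set Ioo_subset_Icc_self)
          measurableSet_Ioo fun r hr => mul_rhoL_coreProfile_le hlam hr.1
    _ = P 1 - P 0 := hP
    _ ≤ _ := hbound

end UpperBound

/-- there are `C > 0` and `R₀ ≥ 1` such that for every `λ ∈ (0, 1/R₀)`,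
`|log λ| − C ≤ λ⁻² inf_{𝒲_λ} I_λ ≤ |log λ| + C`, where
`I_λ(û, ŵ) = ∫₀¹ r ρ^el_λ(r) dr`. -/
theorem stmt11 : ∃ C : ℝ, 0 < C ∧ ∃ R₀ : ℝ, 1 ≤ R₀ ∧
    ∀ lam : ℝ, 0 < lam → lam < 1 / R₀ →
      |Real.log lam| - C ≤
        (sInf {x : ℝ | ∃ uh wh uh' wh' : ℝ → ℝ, MemWL lam uh wh uh' wh' ∧
          x = ∫ r in Ioo 0 1, r * rhoL lam uh wh uh' wh' r}) / lam ^ 2 ∧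
      (sInf {x : ℝ | ∃ uh wh uh' wh' : ℝ → ℝ, MemWL lam uh wh uh' wh' ∧
          x = ∫ r in Ioo 0 1, r * rhoL lam uh wh uh' wh' r}) / lam ^ 2 ≤
        |Real.log lam| + C := by
  refine ⟨5, by norm_num, 1, le_rfl, fun lam hlam hlam1 => ?_⟩
  rw [div_one] at hlam1
  set S := {x : ℝ | ∃ uh wh uh' wh' : ℝ → ℝ, MemWL lam uh wh uh' wh' ∧
    x = ∫ r in Ioo 0 1, r * rhoL lam uh wh uh' wh' r}
  have hlower : ∀ x ∈ S, lam ^ 2 * (-Real.log lam - 3 / 2) ≤ x := by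
    rintro x ⟨uh, wh, uh', wh', h, rfl⟩
    exact le_integral_rhoL hlam h
  have hcore : ∫ r in Ioo 0 1, r * rhoL lam 0 (coreProfile lam) 0 (coreProfileDeriv lam) r ∈ S :=
    ⟨0, coreProfile lam, 0, coreProfileDeriv lam, memWL_coreProfile hlam, rfl⟩
  have hge := le_csInf ⟨_, hcore⟩ hlower
  have hle := (csInf_le ⟨_, hlower⟩ hcore).trans (integral_rhoL_coreProfile_le hlam hlam1.le)
  have hlam2 : 0 < lam ^ 2 := by positivity
  rw [abs_of_neg (Real.log_neg hlam hlam1), le_div_iff₀ hlam2, div_le_iff₀ hlam2]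
  constructor <;> nlinarith
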